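/- arXiv:1908.02597 — 2 statements merged into one kernel-verified Lean document; each statement's English description precedes it below -/
import Mathlib

section
/- For integers i ≥ 2 and 0 ≤ j ≤ i, the two expressions for Kaula's eccentricity function agree: (1/η^{2i−1}) Σ_{k=0}^{i−1} C(i−1,k) C(k, (k+i)/2 − j) e^k/2^k (sum over k with k+i even and 0 ≤ (k+i)/2 − j ≤ k) equals (1/η^{2i−1}) Σ_{l=0}^{ĵ−1} C(i−1, q) C(q, l) e^q/2^q with q = 2l + i − 2ĵ, where ĵ = j if i ≥ 2j and ĵ = i − j otherwise. -/
open Finset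

/-- Direct form of Kaula's zonal eccentricity function, Eq. (miG): the sum runs
over `0 ≤ k ≤ i-1` with `k + i` even and `0 ≤ (k+i)/2 - j ≤ k`. -/
noncomputable def Gdirect (i j : ℕ) (e η : ℝ) : ℝ :=
  (1 / η ^ (2 * i - 1)) * ∑ k ∈ Finset.range i,
    (if Even (k + i) ∧ j ≤ (k + i) / 2 ∧ (k + i) / 2 ≤ k + j then
      (Nat.choose (i - 1) k : ℝ) * (Nat.choose k ((k + i) / 2 - j) : ℝ) * e ^ k / 2 ^ k
    else 0)

/-- Kaula's rearranged form, Eq. (KaulaG), with `ĵ = j` if `i ≥ 2j` and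
`ĵ = i - j` otherwise, and `q = 2l + i - 2ĵ`. -/
noncomputable def Gkaula (i j : ℕ) (e η : ℝ) : ℝ :=
  (1 / η ^ (2 * i - 1)) *
    ∑ l ∈ Finset.range (if 2 * j ≤ i then j else i - j),
      (Nat.choose (i - 1) (2 * l + i - 2 * (if 2 * j ≤ i then j else i - j)) : ℝ) *
        (Nat.choose (2 * l + i - 2 * (if 2 * j ≤ i then j else i - j)) l : ℝ) *
        e ^ (2 * l + i - 2 * (if 2 * j ≤ i then j else i - j)) /
        2 ^ (2 * l + i - 2 * (if 2 * j ≤ i then j else i - j))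

theorem Gdirect_eq_Gkaula (i j : ℕ) (hi : 2 ≤ i) (hj : j ≤ i)
    (e : ℝ) (he : e ∈ Set.Ico (0 : ℝ) 1) (η : ℝ) (hη : η = Real.sqrt (1 - e ^ 2)) :
    Gdirect i j e η = Gkaula i j e η := by
  unfold Gdirect Gkaula
  congr 1
  set J : ℕ := if 2 * j ≤ i then j else i - j with hJ
  have hJle : 2 * J ≤ i := by
    rw [hJ]; split <;> omega
  have hJj : J = j ∨ (¬ 2 * j ≤ i ∧ J = i - j) := by
    rw [hJ]; split
    · exact Or.inl rfl
    · exact Or.inr ⟨by assumption, rfl⟩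
  rw [Finset.sum_ite, Finset.sum_const_zero, add_zero]
  symm
  apply Finset.sum_nbij' (i := fun l => 2 * l + i - 2 * J)
    (j := fun k => (k - (i - 2 * J)) / 2)
  · intro l hl
    simp only [Finset.mem_range] at hl
    simp only [Finset.mem_filter, Finset.mem_range, Nat.even_iff]
    rcases hJj with h | ⟨h, hJe⟩ <;> omega
  · intro k hk
    simp only [Finset.mem_filter, Finset.mem_range, Nat.even_iff] at hk
    simp only [Finset.mem_range]
    rcases hJj with h | ⟨h, hJe⟩ <;> omega
  · intro l hl
    simp only [Finset.mem_range] at hl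
    omega
  · intro k hk
    simp only [Finset.mem_filter, Finset.mem_range, Nat.even_iff] at hk
    rcases hJj with h | ⟨h, hJe⟩ <;> omega
  · intro l hl
    simp only [Finset.mem_range] at hl
    have hch : Nat.choose (2 * l + i - 2 * J) ((2 * l + i - 2 * J + i) / 2 - j)
        = Nat.choose (2 * l + i - 2 * J) l := by
      rcases hJj with h | ⟨h, hJe⟩
      · have h1 : (2 * l + i - 2 * J + i) / 2 - j = (2 * l + i - 2 * J) - l := by omega
        have h2 : l ≤ 2 * l + i - 2 * J := by omega
        rw [h1, Nat.choose_symm h2]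
      · have h1 : (2 * l + i - 2 * J + i) / 2 - j = l := by omega
        rw [h1]
    rw [hch]
end

section
/- The function W₁(f, ω) = G (R²/p²)(C₂₀/8)·[e(4−6s²) sin f + s²(Q₀ sin 2ω + 3e sin(f+2ω) + 3 sin(2f+2ω) + e sin(3f+2ω))] with Q₀ = e²(1+2η)/(1+η)², when averaged over the mean anomaly ℓ (i.e., ∫_0^{2π} W₁ dℓ = 0 with dℓ = η³(1+e cos f)^{−2} df), vanishes. -/
open Real intervalIntegral

/-! Expanding `sin (k f + 2ω) = sin (k f) cos 2ω + cos (k f) sin 2ω`, the integrand splits into an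
odd `2π`-periodic function, whose integral over a period vanishes, and `sin 2ω` times the even part
`(Q₀ + 3e cos f + 3 cos 2f + e cos 3f) / u²` with `u = 1 + e cos f`. The value of `Q₀` is exactly the
one for which `e² (Q₀ + 3e cos f + 3 cos 2f + e cos 3f) = 4u³ - 6u² + 2η³`, so `e²` times the even part
is `4e cos f - 2 + 2η³/u²`. Since `dℓ = η³/u² df` and the mean anomaly `ℓ` advances by `2π` over one
revolution, this integrates to `0 - 4π + 4π = 0`. -/

theorem Function.Periodic.intervalIntegral_eq_zero_of_odd {g : ℝ → ℝ} {T : ℝ}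
    (hper : Function.Periodic g T) (hodd : Function.Odd g) :
    ∫ x in (0 : ℝ)..T, g x = 0 := by
  have hsym : ∫ x in -(T / 2)..T / 2, g x = 0 := by
    have h := integral_comp_neg (a := -(T / 2)) (b := T / 2) g
    simp only [hodd _, integral_neg, neg_neg] at h
    linarith
  calc ∫ x in (0 : ℝ)..T, g x = ∫ x in -(T / 2)..-(T / 2) + T, g x := by
        simpa using hper.intervalIntegral_add_eq 0 (-(T / 2))
    _ = 0 := by rw [show -(T / 2) + T = T / 2 by ring, hsym]

lemma one_add_mul_cos_pos {e : ℝ} (he : |e| < 1) (f : ℝ) : 0 < 1 + e * cos f := by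
  have : |e * cos f| < 1 := by
    rw [abs_mul]; nlinarith [abs_cos_le_one f, abs_nonneg e, abs_nonneg (cos f)]
  linarith [neg_abs_le (e * cos f)]

lemma continuous_div_one_add_mul_cos_sq {e : ℝ} (he : |e| < 1) {g : ℝ → ℝ}
    (hg : Continuous g) : Continuous fun f => g f / (1 + e * cos f) ^ 2 :=
  hg.div (by fun_prop) fun f => (pow_pos (one_add_mul_cos_pos he f) 2).ne'

/-- Kepler's mean anomaly `ℓ = E - e sin E` in terms of the true anomaly `f`, where the eccentric
anomaly is `E = f - 2 arctan (e sin f / (1 + η + e cos f))` and `e sin E = e η sin f / (1 + e cos f)`. -/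
noncomputable def meanAnomaly (e f : ℝ) : ℝ :=
  f - 2 * arctan (e * sin f / (1 + √(1 - e ^ 2) + e * cos f))
    - e * √(1 - e ^ 2) * sin f / (1 + e * cos f)

lemma hasDerivAt_arctan_eccentric {e : ℝ} (he : |e| < 1) (f : ℝ) :
    HasDerivAt (fun x => arctan (e * sin x / (1 + √(1 - e ^ 2) + e * cos x)))
      ((1 + e * cos f - √(1 - e ^ 2)) / (2 * (1 + e * cos f))) f := by
  set η := √(1 - e ^ 2)
  have hη2 : η ^ 2 = 1 - e ^ 2 := Real.sq_sqrt (by nlinarith [sq_abs e, abs_nonneg e])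
  have hu := one_add_mul_cos_pos he f
  have hden : 0 < 1 + η + e * cos f := by linarith [Real.sqrt_nonneg (1 - e ^ 2)]
  have hden' : HasDerivAt (fun x => 1 + η + e * cos x) (-(e * sin f)) f := by
    simpa using ((hasDerivAt_cos f).const_mul e).const_add (1 + η)
  refine (((hasDerivAt_sin f).const_mul e).div hden' hden.ne').arctan.congr_deriv ?_
  have hq : (1 + η + e * cos f) ^ 2 + (e * sin f) ^ 2 ≠ 0 := by positivity
  simp only [Pi.div_apply]
  field_simp
  linear_combination (1 + e * cos f + η) * hη2 + e ^ 2 * (1 + e * cos f + η) * sin_sq_add_cos_sq f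

lemma hasDerivAt_meanAnomaly {e : ℝ} (he : |e| < 1) (f : ℝ) :
    HasDerivAt (meanAnomaly e) (√(1 - e ^ 2) ^ 3 / (1 + e * cos f) ^ 2) f := by
  have hη2 : √(1 - e ^ 2) ^ 2 = 1 - e ^ 2 := Real.sq_sqrt (by nlinarith [sq_abs e, abs_nonneg e])
  have hu := one_add_mul_cos_pos he f
  have hu' : HasDerivAt (fun x => 1 + e * cos x) (-(e * sin f)) f := by
    simpa using ((hasDerivAt_cos f).const_mul e).const_add 1
  have hS := ((hasDerivAt_sin f).const_mul (e * √(1 - e ^ 2))).div hu' hu.ne'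
  refine (((hasDerivAt_id f).sub ((hasDerivAt_arctan_eccentric he f).const_mul 2)).sub hS)
    |>.congr_deriv ?_
  field_simp
  linear_combination -√(1 - e ^ 2) * hη2 - e ^ 2 * √(1 - e ^ 2) * sin_sq_add_cos_sq f

lemma meanAnomaly_two_pi (e : ℝ) : meanAnomaly e (2 * π) = 2 * π + meanAnomaly e 0 := by
  simp [meanAnomaly]

theorem integral_sqrt_one_sub_sq_pow_three_div_one_add_mul_cos_sq {e : ℝ} (he : |e| < 1) :
    ∫ f in (0 : ℝ)..2 * π, √(1 - e ^ 2) ^ 3 / (1 + e * cos f) ^ 2 = 2 * π := by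
  rw [integral_eq_sub_of_hasDerivAt (fun f _ => hasDerivAt_meanAnomaly he f)
    ((continuous_div_one_add_mul_cos_sq he continuous_const).intervalIntegrable _ _),
    meanAnomaly_two_pi, add_sub_cancel_right]

theorem integral_sin_combination_div_one_add_mul_cos_sq (e a b c : ℝ) :
    ∫ f in (0 : ℝ)..2 * π, (a * sin f + b * sin (2 * f) + c * sin (3 * f)) / (1 + e * cos f) ^ 2
      = 0 := by
  refine Function.Periodic.intervalIntegral_eq_zero_of_odd (fun f => ?_) (fun f => ?_)
  · rw [show 2 * (f + 2 * π) = 2 * f + 2 * π + 2 * π by ring,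
      show 3 * (f + 2 * π) = 3 * f + 2 * π + 2 * π + 2 * π by ring]
    simp only [sin_add_two_pi, cos_add_two_pi]
  · simp only [mul_neg, sin_neg, cos_neg]
    ring

lemma eccentricity_sq_mul_Q0 {e η : ℝ} (hη2 : η ^ 2 = 1 - e ^ 2) (hη : 0 ≤ η) :
    e ^ 2 * (e ^ 2 * (1 + 2 * η) / (1 + η) ^ 2) = 2 * η ^ 3 + 3 * e ^ 2 - 2 := by
  field_simp
  linear_combination ((1 + 2 * η) * (e ^ 2 + 1 - η ^ 2) - 3 * (1 + η) ^ 2) * hη2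

theorem integral_cos_combination_div_one_add_mul_cos_sq {e η : ℝ} (he : |e| < 1) (he0 : e ≠ 0)
    (hη : η = √(1 - e ^ 2)) :
    ∫ f in (0 : ℝ)..2 * π, (e ^ 2 * (1 + 2 * η) / (1 + η) ^ 2 + 3 * e * cos f + 3 * cos (2 * f)
      + e * cos (3 * f)) / (1 + e * cos f) ^ 2 = 0 := by
  have hη2 : η ^ 2 = 1 - e ^ 2 := hη ▸ Real.sq_sqrt (by nlinarith [sq_abs e, abs_nonneg e])
  have hQ0 := eccentricity_sq_mul_Q0 hη2 (hη ▸ Real.sqrt_nonneg _)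
  have hsplit : ∀ f, (e ^ 2 * (1 + 2 * η) / (1 + η) ^ 2 + 3 * e * cos f + 3 * cos (2 * f)
      + e * cos (3 * f)) / (1 + e * cos f) ^ 2
      = (4 * e * cos f - 2) / e ^ 2 + 2 / e ^ 2 * (η ^ 3 / (1 + e * cos f) ^ 2) := by
    intro f
    have hu := (one_add_mul_cos_pos he f).ne'
    rw [cos_two_mul, cos_three_mul]
    field_simp
    linear_combination hQ0
  simp_rw [hsplit]
  rw [integral_add, integral_div, integral_const_mul, hη,
    integral_sqrt_one_sub_sq_pow_three_div_one_add_mul_cos_sq he]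
  · simp only [intervalIntegrable_cos, IntervalIntegrable.const_mul, intervalIntegrable_const,
      integral_sub, integral_const_mul, integral_cos, sin_two_pi, sin_zero, sub_self, mul_zero,
      integral_const, sub_zero, smul_eq_mul, zero_sub]
    ring
  · exact (by fun_prop : Continuous _).intervalIntegrable _ _
  · exact ((continuous_div_one_add_mul_cos_sq he continuous_const).const_mul _).intervalIntegrable
      _ _

theorem W1_mean_anomaly_average_zero_general (e : ℝ) (he : e ∈ Set.Ioo (0 : ℝ) 1)
    (η : ℝ) (hη : η = Real.sqrt (1 - e ^ 2))
    (G R p C20 s ω Q0 : ℝ)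
    (hQ0 : Q0 = e ^ 2 * (1 + 2 * η) / (1 + η) ^ 2)
    (W1 : ℝ → ℝ)
    (hW1 : ∀ f, W1 f = G * (R ^ 2 / p ^ 2) * (C20 / 8) *
      (e * (4 - 6 * s ^ 2) * Real.sin f +
        s ^ 2 * (Q0 * Real.sin (2 * ω) + 3 * e * Real.sin (f + 2 * ω) +
          3 * Real.sin (2 * f + 2 * ω) + e * Real.sin (3 * f + 2 * ω)))) :
    ∫ f in (0 : ℝ)..(2 * π), W1 f * η ^ 3 / (1 + e * Real.cos f) ^ 2 = 0 := by
  obtain ⟨he0, he1⟩ := he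
  have he' : |e| < 1 := abs_lt.2 ⟨by linarith, he1⟩
  set K := G * (R ^ 2 / p ^ 2) * (C20 / 8) * η ^ 3
  have hsplit : ∀ f, W1 f * η ^ 3 / (1 + e * cos f) ^ 2 =
      K * (((e * (4 - 6 * s ^ 2) + 3 * e * s ^ 2 * cos (2 * ω)) * sin f
        + 3 * s ^ 2 * cos (2 * ω) * sin (2 * f) + e * s ^ 2 * cos (2 * ω) * sin (3 * f))
          / (1 + e * cos f) ^ 2)
      + K * s ^ 2 * sin (2 * ω) * ((Q0 + 3 * e * cos f + 3 * cos (2 * f) + e * cos (3 * f))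
          / (1 + e * cos f) ^ 2) := by
    intro f
    rw [hW1, sin_add, sin_add, sin_add]
    ring
  simp_rw [hsplit]
  rw [integral_add, integral_const_mul, integral_const_mul,
    integral_sin_combination_div_one_add_mul_cos_sq, hQ0,
    integral_cos_combination_div_one_add_mul_cos_sq he' he0.ne' hη, mul_zero, mul_zero, add_zero]
  all_goals exact
    ((continuous_div_one_add_mul_cos_sq he' (by fun_prop)).const_mul _).intervalIntegrable _ _

theorem W1_mean_anomaly_average_zero (e : ℝ) (he : e ∈ Set.Ioo (0 : ℝ) 1)
    (η : ℝ) (hη : η = Real.sqrt (1 - e ^ 2))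
    (G R p C20 s ω Q0 : ℝ) (hp : p ≠ 0)
    (hQ0 : Q0 = e ^ 2 * (1 + 2 * η) / (1 + η) ^ 2)
    (W1 : ℝ → ℝ)
    (hW1 : ∀ f, W1 f = G * (R ^ 2 / p ^ 2) * (C20 / 8) *
      (e * (4 - 6 * s ^ 2) * Real.sin f +
        s ^ 2 * (Q0 * Real.sin (2 * ω) + 3 * e * Real.sin (f + 2 * ω) +
          3 * Real.sin (2 * f + 2 * ω) + e * Real.sin (3 * f + 2 * ω)))) :
    ∫ f in (0 : ℝ)..(2 * π), W1 f * η ^ 3 / (1 + e * Real.cos f) ^ 2 = 0 :=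
  W1_mean_anomaly_average_zero_general e he η hη G R p C20 s ω Q0 hQ0 W1 hW1
end
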